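/- Let α > −1 be real, and let β, l be nonnegative integers with β − l even and nonnegative. Then for all integers p ≥ 0, with n = l + 2p, b_n^{l,α} := ∫₀¹ ρ^{β} (1−ρ²)^{α} R_n^{l,α}(ρ) ρ² (1−ρ²)^{−α} dρ = (1/2) · Γ((β−l)/2 + 1)/(p! Γ((β−l)/2 − p + 1)) · Γ(p+α+1) Γ((β+l)/2 + 3/2) / Γ((β+l)/2 + p + α + 5/2); in particular b_n^{l,α} = 0 when p > (β−l)/2. -/

import Mathlib

open Real MeasureTheory

noncomputable def genBinom (a : ℝ) (p : ℕ) : ℝ :=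
  (∏ j ∈ Finset.range p, (a - j)) / (Nat.factorial p : ℝ)

noncomputable def jacobiP (k : ℕ) (a b : ℝ) (x : ℝ) : ℝ :=
  ∑ j ∈ Finset.range (k + 1),
    genBinom ((k : ℝ) + a) (k - j) * genBinom ((k : ℝ) + b) j *
      ((x - 1) / 2) ^ j * ((x + 1) / 2) ^ (k - j)

/-- generalized Pochhammer symbol `(x)_α = Γ(x+α)/Γ(x)` -/
noncomputable def pochG (x α : ℝ) : ℝ := Real.Gamma (x + α) / Real.Gamma x

/-- integer-order Pochhammer symbol `(x)_k = x(x+1)⋯(x+k−1)` -/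
noncomputable def pochN (x : ℝ) (k : ℕ) : ℝ := ∏ j ∈ Finset.range k, (x + j)

/-- generalized 3D Zernike radial function `R_{l+2p}^{l,α}` -/
noncomputable def R3 (α : ℝ) (l p : ℕ) (ρ : ℝ) : ℝ :=
  ρ ^ l * (1 - ρ ^ 2) ^ α * jacobiP p α ((l : ℝ) + 1 / 2) (2 * ρ ^ 2 - 1)

/-- generalized 2D Zernike radial function `²R_{m+2p}^{m,α}` -/
noncomputable def R2 (α : ℝ) (m p : ℕ) (ρ : ℝ) : ℝ :=
  ρ ^ m * (1 - ρ ^ 2) ^ α * jacobiP p α (m : ℝ) (2 * ρ ^ 2 - 1)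

/-- spherical Bessel function of real order `a` -/
noncomputable def sphBessel (a : ℝ) (z : ℝ) : ℝ :=
  Real.sqrt π / 2 * (z / 2) ^ a *
    ∑' k : ℕ, (-(z ^ 2) / 4) ^ k / ((Nat.factorial k : ℝ) * Real.Gamma ((k : ℝ) + a + 3 / 2))

/-- Gegenbauer polynomial `C_n^λ` -/
noncomputable def gegenbauer (n : ℕ) (lam : ℝ) (x : ℝ) : ℝ :=
  ∑ k ∈ Finset.range (n / 2 + 1),
    (-1) ^ k * Real.Gamma (((n - k : ℕ) : ℝ) + lam) /
      (Real.Gamma lam * (Nat.factorial k : ℝ) * (Nat.factorial (n - 2 * k) : ℝ)) *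
      (2 * x) ^ (n - 2 * k)

/-- Legendre polynomial `P_l` -/
noncomputable def legendreFun (l : ℕ) (x : ℝ) : ℝ :=
  (1 / 2 ^ l) * ∑ k ∈ Finset.range (l + 1),
    ((Nat.choose l k : ℝ)) ^ 2 * (x - 1) ^ (l - k) * (x + 1) ^ k

/-- associated Legendre function `P_l^m` -/
noncomputable def assocLegendre (l m : ℕ) (x : ℝ) : ℝ :=
  (1 - x ^ 2) ^ ((m : ℝ) / 2) * iteratedDeriv m (legendreFun l) x

/-- spherical harmonic `Y_l^m`, evaluated at a (unit) vector `v ∈ ℝ³`: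
`cos θ = v 2`, `φ = arg (v 0 + i v 1)`. -/
noncomputable def sphHarm (l : ℕ) (m : ℤ) (v : EuclideanSpace ℝ (Fin 3)) : ℂ :=
  (-1 : ℂ) ^ m *
    (Real.sqrt ((2 * l + 1) / (4 * π) *
      (Nat.factorial (l - m.natAbs) : ℝ) / (Nat.factorial (l + m.natAbs) : ℝ)) : ℝ) *
    (assocLegendre l m.natAbs (v 2) : ℝ) *
    Complex.exp (Complex.I * m * (Complex.arg (v 0 + Complex.I * v 1) : ℝ))

/-- generalized 3D Zernike function `Z_{nl}^{m,α}` on ℝ³ -/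
noncomputable def Z3 (α : ℝ) (l p : ℕ) (m : ℤ) (ω : EuclideanSpace ℝ (Fin 3)) : ℂ :=
  (R3 α l p ‖ω‖ : ℝ) * sphHarm l m (‖ω‖⁻¹ • ω)

/-!
Substituting `t = ρ²` turns each term of the explicit expansion of the Jacobi polynomial into a
Beta integral, so `b_n^{l,α}` is a finite sum of products of Gamma values. Written through
generalized binomial coefficients, that sum collapses by the Chu–Vandermonde identity to the
single coefficient `C(q, p)` with `q = (β − l)/2`, which is `Γ(q+1)/(p! Γ(q−p+1))` and vanishes
for `p > q`.
-/

open scoped Nat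

section

open Set

lemma integral_rpow_mul_one_sub_rpow {u v : ℝ} (hu : 0 < u) (hv : 0 < v) :
    ∫ x in (0:ℝ)..1, x ^ (u - 1) * (1 - x) ^ (v - 1) = Gamma u * Gamma v / Gamma (u + v) := by
  have hB : Complex.betaIntegral u v
      = ((∫ x in (0:ℝ)..1, x ^ (u - 1) * (1 - x) ^ (v - 1) : ℝ) : ℂ) := by
    rw [Complex.betaIntegral, ← intervalIntegral.integral_ofReal]
    refine intervalIntegral.integral_congr fun x hx => ?_
    rw [uIcc_of_le zero_le_one] at hx
    push_cast
    rw [Complex.ofReal_cpow hx.1, Complex.ofReal_cpow (sub_nonneg.mpr hx.2)]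
    push_cast
    ring_nf
  have h := Complex.betaIntegral_eq_Gamma_mul_div u v (by simpa using hu) (by simpa using hv)
  rw [hB, ← Complex.ofReal_add, Complex.Gamma_ofReal, Complex.Gamma_ofReal,
    Complex.Gamma_ofReal] at h
  exact_mod_cast h

lemma image_sq_Ioo_zero_one : (fun x : ℝ => x ^ 2) '' Ioo 0 1 = Ioo 0 1 := by
  ext t
  constructor
  · rintro ⟨x, ⟨hx0, hx1⟩, rfl⟩
    exact ⟨by positivity, by nlinarith⟩
  · rintro ⟨ht0, ht1⟩
    refine ⟨√t, ⟨Real.sqrt_pos.mpr ht0, ?_⟩, Real.sq_sqrt ht0.le⟩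
    rwa [Real.sqrt_lt' one_pos, one_pow]

lemma integral_pow_mul_one_sub_sq_rpow (n : ℕ) {s : ℝ} (hs : -1 < s) :
    ∫ ρ in (0:ℝ)..1, ρ ^ n * (1 - ρ ^ 2) ^ s
      = Gamma ((n + 1) / 2) * Gamma (s + 1) / (2 * Gamma ((n + 1) / 2 + s + 1)) := by
  set g : ℝ → ℝ := fun t => t ^ (((n + 1) / 2 : ℝ) - 1) * (1 - t) ^ (s + 1 - 1)
  have hsub := integral_image_eq_integral_abs_deriv_smul (f' := fun x => 2 * x)
    (measurableSet_Ioo (a := (0:ℝ)) (b := 1))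
    (fun x _ => by simpa using (hasDerivAt_pow 2 x).hasDerivWithinAt)
    ((pow_left_strictMonoOn₀ two_ne_zero).injOn.mono
      (Ioo_subset_Icc_self.trans Icc_subset_Ici_self)) g
  rw [image_sq_Ioo_zero_one] at hsub
  have hpull : EqOn (fun ρ : ℝ => ρ ^ n * (1 - ρ ^ 2) ^ s)
      (fun ρ => (1 / 2 : ℝ) * (|2 * ρ| • g (ρ ^ 2))) (Ioo 0 1) := by
    rintro ρ ⟨hρ, -⟩
    have : (ρ ^ 2) ^ (((n + 1) / 2 : ℝ) - 1) = ρ ^ n / ρ := by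
      rw [← Real.rpow_natCast ρ 2, ← Real.rpow_mul hρ.le, ← Real.rpow_natCast ρ n,
        ← Real.rpow_sub_one hρ.ne']
      ring_nf
    simp only [g, this, smul_eq_mul, abs_of_pos (by positivity : (0:ℝ) < 2 * ρ),
      add_sub_cancel_right]
    field_simp
  calc ∫ ρ in (0:ℝ)..1, ρ ^ n * (1 - ρ ^ 2) ^ s
      = (1 / 2) * ∫ ρ in Ioo (0:ℝ) 1, |2 * ρ| • g (ρ ^ 2) := by
        rw [intervalIntegral.integral_congr_Ioo_of_le zero_le_one hpull,
          intervalIntegral.integral_of_le zero_le_one, integral_Ioc_eq_integral_Ioo,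
          integral_const_mul]
    _ = (1 / 2) * ∫ t in (0:ℝ)..1, g t := by
        rw [← hsub, intervalIntegral.integral_of_le zero_le_one, integral_Ioc_eq_integral_Ioo]
    _ = _ := by
        rw [integral_rpow_mul_one_sub_rpow (by positivity) (by linarith)]
        ring_nf

lemma intervalIntegrable_pow_mul_one_sub_sq_rpow (n : ℕ) {s : ℝ} (hs : -1 < s) :
    IntervalIntegrable (fun ρ : ℝ => ρ ^ n * (1 - ρ ^ 2) ^ s) volume 0 1 := by
  have h1 : IntervalIntegrable (fun ρ : ℝ => (1 - ρ) ^ s) volume 0 1 := by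
    simpa using
      ((intervalIntegral.intervalIntegrable_rpow' (a := 0) (b := 1) hs).comp_sub_left 1).symm
  have h2 : ContinuousOn (fun ρ : ℝ => ρ ^ n * (1 + ρ) ^ s) (uIcc 0 1) := by
    rw [uIcc_of_le zero_le_one]
    exact ContinuousOn.mul (by fun_prop)
      (ContinuousOn.rpow_const (by fun_prop) fun x hx => Or.inl (by linarith [hx.1]))
  refine (h1.continuousOn_mul h2).congr_uIoo fun ρ hρ => ?_
  rw [uIoo_of_le zero_le_one] at hρ
  simp only
  rw [mul_assoc, ← Real.mul_rpow (by linarith [hρ.1]) (by linarith [hρ.2])]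
  ring_nf

end

open Finset

lemma genBinom_eq_choose (a : ℝ) (k : ℕ) : genBinom a k = Ring.choose a k := by
  rw [Ring.choose_eq_smul, genBinom, smul_eq_mul, ← Polynomial.aeval_eq_smeval,
    ← Polynomial.eval_map_algebraMap, descPochhammer_map, descPochhammer_eval_eq_prod_range,
    div_eq_inv_mul]

lemma Gamma_add_nat_eq_mul_choose {x : ℝ} (hx : 0 < x) (k : ℕ) :
    Gamma (x + k) = k ! * Ring.choose (x + k - 1) k * Gamma x := by
  rw [← Ring.multichoose_eq, ← nsmul_eq_mul, Ring.factorial_nsmul_multichoose_eq_ascPochhammer,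
    Polynomial.ascPochhammer_smeval_eq_eval]
  induction k with
  | zero => simp
  | succ k ih =>
    rw [ascPochhammer_succ_right, Polynomial.eval_mul, Nat.cast_succ, ← add_assoc,
      Real.Gamma_add_one (by positivity), ih]
    simp only [Polynomial.eval_add, Polynomial.eval_X, Polynomial.eval_natCast]
    ring

lemma Ring.choose_neg_eq_neg_one_pow_mul {R : Type*} [CommRing R] [BinomialRing R] (r : R)
    (n : ℕ) : Ring.choose (-r) n = (-1) ^ n * Ring.choose (r + n - 1) n := by
  rw [Ring.choose_neg, Int.negOnePow_def, zpow_natCast, Units.smul_def, zsmul_eq_mul]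
  simp

lemma Ring.sum_neg_one_pow_mul_choose_mul_choose {R : Type*} [CommRing R] [BinomialRing R]
    (x y : R) (p : ℕ) :
    ∑ j ∈ range (p + 1), (-1) ^ j * Ring.choose x j * Ring.choose (y + (p - j : ℕ)) (p - j)
      = Ring.choose (y - x + p) p := by
  have hflip : ∀ m : ℕ, Ring.choose (y + m) m = (-1) ^ m * Ring.choose (-(y + 1)) m := by
    intro m
    rw [Ring.choose_neg_eq_neg_one_pow_mul, ← mul_assoc, ← mul_pow]
    simp only [mul_neg, mul_one, neg_neg, one_pow, one_mul]
    ring_nf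
  calc ∑ j ∈ range (p + 1), (-1) ^ j * Ring.choose x j * Ring.choose (y + (p - j : ℕ)) (p - j)
      = (-1) ^ p * ∑ j ∈ range (p + 1), Ring.choose x j * Ring.choose (-(y + 1)) (p - j) := by
        rw [mul_sum]
        refine sum_congr rfl fun j hj => ?_
        rw [hflip, ← pow_sub_mul_pow (-1 : R) (Nat.le_of_lt_succ (mem_range.mp hj))]
        ring
    _ = (-1) ^ p * Ring.choose (x + -(y + 1)) p := by
        rw [Ring.add_choose_eq p (Commute.all _ _), Nat.sum_antidiagonal_eq_sum_range_succ_mk]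
    _ = Ring.choose (y - x + p) p := by
        rw [show x + -(y + 1) = -(y - x + 1) by ring, Ring.choose_neg_eq_neg_one_pow_mul,
          ← mul_assoc, ← mul_pow]
        simp only [mul_neg, mul_one, neg_neg, one_pow, one_mul]
        ring_nf

lemma sum_genBinom_mul_Gamma_mul_Gamma {α σ : ℝ} (hα : -1 < α) (hσ : -1 < σ) (b : ℝ) (p : ℕ) :
    ∑ j ∈ range (p + 1), genBinom (p + α) (p - j) * genBinom (p + b) j * (-1) ^ j
        * (Gamma (σ + 1 + (p - j : ℕ)) * Gamma (α + 1 + j))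
      = Gamma (α + 1 + p) * Gamma (σ + 1) * Ring.choose (σ - b) p := by
  have hterm : ∀ j ∈ range (p + 1),
      genBinom (p + α) (p - j) * genBinom (p + b) j * (-1) ^ j
          * (Gamma (σ + 1 + (p - j : ℕ)) * Gamma (α + 1 + j))
        = Gamma (α + 1 + p) * Gamma (σ + 1)
          * ((-1) ^ j * Ring.choose (p + b) j * Ring.choose (σ + (p - j : ℕ)) (p - j)) := by
    intro j hj
    have hjp : j ≤ p := Nat.le_of_lt_succ (mem_range.mp hj)
    have hα1 : 0 < α + 1 := by linarith
    have hcast : ((p - j : ℕ) : ℝ) = p - j := Nat.cast_sub hjp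
    have hαj := Gamma_add_nat_eq_mul_choose (x := α + 1 + j) (by positivity) (p - j)
    rw [hcast, show α + 1 + j + (p - j) = α + 1 + p by ring,
      show α + 1 + p - 1 = p + α by ring] at hαj
    rw [Gamma_add_nat_eq_mul_choose (by linarith) (p - j), hαj, genBinom_eq_choose,
      genBinom_eq_choose, show σ + 1 + ((p - j : ℕ) : ℝ) - 1 = σ + (p - j : ℕ) by ring]
    ring
  rw [sum_congr rfl hterm, ← mul_sum, Ring.sum_neg_one_pow_mul_choose_mul_choose]
  ring_nf

lemma jacobiP_two_mul_sub_one (k : ℕ) (a b t : ℝ) :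
    jacobiP k a b (2 * t - 1)
      = ∑ j ∈ range (k + 1), genBinom (k + a) (k - j) * genBinom (k + b) j * (-1) ^ j
          * ((1 - t) ^ j * t ^ (k - j)) := by
  refine sum_congr rfl fun j _ => ?_
  rw [show (2 * t - 1 - 1) / 2 = -(1 - t) by ring, show (2 * t - 1 + 1) / 2 = t by ring, neg_pow]
  ring

lemma integral_pow_mul_jacobiP (n p : ℕ) {α : ℝ} (hα : -1 < α) (b : ℝ) :
    ∫ ρ in (0:ℝ)..1, ρ ^ n * (1 - ρ ^ 2) ^ α * jacobiP p α b (2 * ρ ^ 2 - 1)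
      = Ring.choose ((n - 1) / 2 - b) p * Gamma (α + 1 + p) * Gamma ((n + 1) / 2)
          / (2 * Gamma ((n + 1) / 2 + p + α + 1)) := by
  set c : ℕ → ℝ := fun j => genBinom (p + α) (p - j) * genBinom (p + b) j * (-1) ^ j
  have hαj : ∀ j : ℕ, -1 < α + j := fun j => by linarith [(Nat.cast_nonneg j : (0:ℝ) ≤ j)]
  have hexpand :
      Set.EqOn (fun ρ : ℝ => ρ ^ n * (1 - ρ ^ 2) ^ α * jacobiP p α b (2 * ρ ^ 2 - 1))
      (fun ρ => ∑ j ∈ range (p + 1), c j * (ρ ^ (n + 2 * (p - j)) * (1 - ρ ^ 2) ^ (α + j)))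
      (Set.Ioo 0 1) := by
    rintro ρ ⟨hρ0, hρ1⟩
    have hne : 1 - ρ ^ 2 ≠ 0 := by nlinarith
    simp only [jacobiP_two_mul_sub_one, mul_sum]
    refine sum_congr rfl fun j _ => ?_
    rw [Real.rpow_add_natCast hne, pow_add, pow_mul]
    ring
  have hGamma : ∀ j ∈ range (p + 1),
      c j * ∫ ρ in (0:ℝ)..1, ρ ^ (n + 2 * (p - j)) * (1 - ρ ^ 2) ^ (α + j)
        = c j * (Gamma ((n - 1) / 2 + 1 + (p - j : ℕ)) * Gamma (α + 1 + j))
          / (2 * Gamma ((n + 1) / 2 + p + α + 1)) := by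
    intro j hj
    have hjp : j ≤ p := Nat.le_of_lt_succ (mem_range.mp hj)
    rw [integral_pow_mul_one_sub_sq_rpow _ (hαj j)]
    push_cast [Nat.cast_sub hjp]
    ring_nf
  rw [intervalIntegral.integral_congr_Ioo_of_le zero_le_one hexpand,
    intervalIntegral.integral_finsetSum fun j _ =>
      (intervalIntegrable_pow_mul_one_sub_sq_rpow _ (hαj j)).const_mul (c j)]
  simp only [intervalIntegral.integral_const_mul]
  rw [sum_congr rfl hGamma, ← sum_div]
  simp only [c]
  rw [sum_genBinom_mul_Gamma_mul_Gamma hα (by linarith [(Nat.cast_nonneg n : (0:ℝ) ≤ n)])]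
  ring_nf

lemma Nat.cast_choose_eq_Gamma_div (q p : ℕ) :
    (q.choose p : ℝ) = Gamma (q + 1) / (p ! * Gamma (q - p + 1)) := by
  rcases le_or_gt p q with hpq | hqp
  · rw [Nat.cast_choose ℝ hpq, ← Nat.cast_sub hpq, Real.Gamma_nat_eq_factorial,
      Real.Gamma_nat_eq_factorial]
  · have hneg : (q : ℝ) - p + 1 = -((p - q - 1 : ℕ) : ℝ) := by
      rw [Nat.cast_sub (by omega), Nat.cast_sub (by omega)]
      ring
    rw [Nat.choose_eq_zero_of_lt hqp, hneg, Real.Gamma_neg_nat_eq_zero, mul_zero, div_zero,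
      Nat.cast_zero]

lemma integral_zernike_R3_moment {α : ℝ} (hα : -1 < α) (l q p : ℕ) :
    ∫ ρ in (0:ℝ)..1, ρ ^ (l + 2 * q) * (1 - ρ ^ 2) ^ α * R3 α l p ρ * ρ ^ 2 * (1 - ρ ^ 2) ^ (-α)
      = q.choose p * Gamma (α + 1 + p) * Gamma (l + q + 3 / 2)
          / (2 * Gamma (l + q + p + α + 5 / 2)) := by
  have hintegrand : Set.EqOn
      (fun ρ : ℝ => ρ ^ (l + 2 * q) * (1 - ρ ^ 2) ^ α * R3 α l p ρ * ρ ^ 2 * (1 - ρ ^ 2) ^ (-α))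
      (fun ρ => ρ ^ (2 * (l + q + 1)) * (1 - ρ ^ 2) ^ α * jacobiP p α (l + 1 / 2) (2 * ρ ^ 2 - 1))
      (Set.Ioo 0 1) := by
    rintro ρ ⟨hρ0, hρ1⟩
    have hcancel : (1 - ρ ^ 2) ^ α * (1 - ρ ^ 2) ^ (-α) = 1 := by
      rw [← Real.rpow_add (by nlinarith), add_neg_cancel, Real.rpow_zero]
    simp only [R3]
    linear_combination
      (ρ ^ (2 * (l + q + 1)) * (1 - ρ ^ 2) ^ α * jacobiP p α (l + 1 / 2) (2 * ρ ^ 2 - 1)) * hcancel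
  rw [intervalIntegral.integral_congr_Ioo_of_le zero_le_one hintegrand,
    integral_pow_mul_jacobiP _ _ hα, ← Ring.choose_natCast (R := ℝ)]
  push_cast
  ring_nf

/-- `1/Γ(z) = 0` at nonpositive integers `z` is encoded by Mathlib's convention that
`Real.Gamma` vanishes there. -/
theorem stmt18 (α : ℝ) (hα : -1 < α) (β l : ℕ) (hle : l ≤ β) (heven : Even (β - l)) (p : ℕ) :
    (∫ ρ in (0:ℝ)..1, ρ ^ β * (1 - ρ ^ 2) ^ α * R3 α l p ρ * ρ ^ 2 * (1 - ρ ^ 2) ^ (-α)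
      = 1 / 2 * (Real.Gamma (((β : ℝ) - l) / 2 + 1) /
            ((Nat.factorial p : ℝ) * Real.Gamma (((β : ℝ) - l) / 2 - p + 1))) *
          (Real.Gamma ((p : ℝ) + α + 1) * Real.Gamma (((β : ℝ) + l) / 2 + 3 / 2) /
            Real.Gamma (((β : ℝ) + l) / 2 + p + α + 5 / 2)))
    ∧ ((β - l) / 2 < p →
        ∫ ρ in (0:ℝ)..1, ρ ^ β * (1 - ρ ^ 2) ^ α * R3 α l p ρ * ρ ^ 2 * (1 - ρ ^ 2) ^ (-α) = 0) := by
  obtain ⟨q, rfl⟩ : ∃ q, β = l + 2 * q := by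
    obtain ⟨r, hr⟩ := heven
    exact ⟨r, by omega⟩
  rw [integral_zernike_R3_moment hα]
  refine ⟨?_, fun hqp => ?_⟩
  · rw [Nat.cast_choose_eq_Gamma_div]
    push_cast
    ring_nf
  · rw [Nat.choose_eq_zero_of_lt (by omega : q < p)]
    simp
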